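/- arXiv:math/0211020 — 3 statements merged into one kernel-verified Lean document; each statement's English description precedes it below -/
import Mathlib

section
/- Let X_1, X_2, ..., X_n be (possibly dependent) {0,1}-valued random variables with p_i = E[X_i], and let S_n = X_1 + ... + X_n with E[S_n] = Σ_{i=1}^n p_i = λ. Then the relative entropy between the distribution P_{S_n} of S_n and the Poisson(λ) distribution satisfies D(P_{S_n} ‖ Po(λ)) ≤ Σ_{i=1}^n p_i² + [ Σ_{i=1}^n H(X_i) − H(X_1, X_2, ..., X_n) ]. -/
/-!
Let `Y = (X₁, …, X_n)` and let `Q` be the product of the laws `Po(pᵢ)`, restricted to `{0,1}ⁿ`.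
Since `Po(p₁) ⊗ ⋯ ⊗ Po(p_n)` is carried to `Po(λ)` by `x ↦ ∑ xᵢ` (multinomial theorem), the
image of `Q` is dominated by `Po(λ)`, and the log-sum inequality on each fibre gives
`D(P_{S_n} ‖ Po(λ)) ≤ D(P_Y ‖ Q)`. Expanding `log Q`, `D(P_Y ‖ Q) = -H(Y) + ∑ᵢ (pᵢ - pᵢ log pᵢ)`,
and `pᵢ - pᵢ log pᵢ ≤ pᵢ² + H(Xᵢ)` is `(1 - p) log (1 - p) ≤ -p (1 - p)`.
-/

open MeasureTheory ProbabilityTheory Real Filter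

/-- The distribution (probability mass function) of a random variable `X`,
as a real-valued function: `distOf μ X a = μ(X = a)`. -/
noncomputable def distOf {Ω α : Type*} [MeasurableSpace Ω] (μ : Measure Ω) (X : Ω → α) (a : α) : ℝ :=
  (μ {ω | X ω = a}).toReal

/-- Relative entropy `D(P‖Q) = ∑ₓ P(x) log (P(x)/Q(x))` (natural logarithm). -/
noncomputable def relEnt {α : Type*} (P Q : α → ℝ) : ℝ :=
  ∑' x, P x * Real.log (P x / Q x)

/-- Shannon entropy `H(P) = -∑ₓ P(x) log P(x)` (natural logarithm). -/
noncomputable def entH {α : Type*} (P : α → ℝ) : ℝ :=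
  -∑' x, P x * Real.log (P x)

/-- The Poisson(l) probability mass function on ℕ. -/
noncomputable def poissonPMF (l : ℝ) (k : ℕ) : ℝ :=
  Real.exp (-l) * l ^ k / (Nat.factorial k)

/-- The scaled score function `ρ_X(x) = (x+1)P(x+1)/(λ P(x)) - 1`. -/
noncomputable def scaledScore (P : ℕ → ℝ) (l : ℝ) (x : ℕ) : ℝ :=
  ((x + 1 : ℕ) : ℝ) * P (x + 1) / (l * P x) - 1

/-- The scaled Fisher information `K(X) = λ E[ρ_X(X)²]`. -/
noncomputable def scaledFisher (P : ℕ → ℝ) (l : ℝ) : ℝ :=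
  l * ∑' x, P x * (scaledScore P l x) ^ 2

/-- Total variation distance `‖P - Q‖_TV = ∑ₓ |P(x) - Q(x)|`. -/
noncomputable def tvDist {α : Type*} (P Q : α → ℝ) : ℝ :=
  ∑' x, |P x - Q x|

open Finset

theorem sub_le_mul_log_div {a b : ℝ} (ha : 0 ≤ a) (hb : 0 ≤ b) (hab : b = 0 → a = 0) :
    a - b ≤ a * log (a / b) := by
  rcases ha.eq_or_lt with rfl | ha
  · simpa using hb
  have hb : 0 < b := hb.lt_of_ne fun h => ha.ne' (hab h.symm)
  have h := one_sub_inv_le_log_of_pos (div_pos ha hb)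
  rw [inv_div] at h
  calc a - b = a * (1 - b / a) := by field_simp
    _ ≤ a * log (a / b) := mul_le_mul_of_nonneg_left h ha.le

theorem mul_log_div_mul_eq {a b c : ℝ} (hab : b = 0 → a = 0) (hc : c ≠ 0) :
    a * log (a / (c * b)) = a * log (a / b) - a * log c := by
  rcases eq_or_ne a 0 with rfl | ha
  · simp
  have hb : b ≠ 0 := mt hab ha
  rw [div_mul_eq_div_div_swap, log_div (div_ne_zero ha hb) hc, mul_sub]

/-- The log-sum inequality. -/
theorem sum_mul_log_sum_div_le {ι : Type*} (s : Finset ι) {a b : ι → ℝ} {B : ℝ}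
    (ha : ∀ i ∈ s, 0 ≤ a i) (hb : ∀ i ∈ s, 0 ≤ b i) (hab : ∀ i ∈ s, b i = 0 → a i = 0)
    (hB : ∑ i ∈ s, b i ≤ B) :
    (∑ i ∈ s, a i) * log ((∑ i ∈ s, a i) / B) ≤ ∑ i ∈ s, a i * log (a i / b i) := by
  rcases (sum_nonneg ha).eq_or_lt with hA | hA
  · rw [← hA, zero_mul]
    refine sum_nonneg fun i hi => ?_
    simp [(sum_eq_zero_iff_of_nonneg ha).1 hA.symm i hi]
  set A := ∑ i ∈ s, a i
  have hBpos : 0 < B := by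
    refine lt_of_lt_of_le ((sum_nonneg hb).lt_of_ne fun h => hA.ne' ?_) hB
    exact sum_eq_zero fun i hi => hab i hi ((sum_eq_zero_iff_of_nonneg hb).1 h.symm i hi)
  have hc : 0 < A / B := div_pos hA hBpos
  have key : ∀ i ∈ s, a i - A / B * b i ≤ a i * log (a i / b i) - a i * log (A / B) :=
    fun i hi => mul_log_div_mul_eq (hab i hi) hc.ne' ▸ sub_le_mul_log_div (ha i hi)
      (mul_nonneg hc.le (hb i hi)) fun h => hab i hi ((mul_eq_zero.1 h).resolve_left hc.ne')
  have hsum := sum_le_sum key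
  rw [sum_sub_distrib, sum_sub_distrib, ← mul_sum, ← sum_mul] at hsum
  have : A / B * ∑ i ∈ s, b i ≤ A := by
    calc A / B * ∑ i ∈ s, b i ≤ A / B * B := mul_le_mul_of_nonneg_left hB hc.le
      _ = A := div_mul_cancel₀ A hBpos.ne'
  linarith

theorem sum_fiberwise_mul_log_div_le {α β : Type*} [DecidableEq β] (s : Finset α) (t : Finset β)
    {f : α → β} (hf : ∀ x ∈ s, f x ∈ t) {P Q : α → ℝ} {R : β → ℝ}
    (hP : ∀ x ∈ s, 0 ≤ P x) (hQ : ∀ x ∈ s, 0 ≤ Q x) (hPQ : ∀ x ∈ s, Q x = 0 → P x = 0)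
    (hR : ∀ y ∈ t, ∑ x ∈ s with f x = y, Q x ≤ R y) :
    ∑ y ∈ t, (∑ x ∈ s with f x = y, P x) * log ((∑ x ∈ s with f x = y, P x) / R y) ≤
      ∑ x ∈ s, P x * log (P x / Q x) := by
  rw [← sum_fiberwise_of_maps_to hf]
  refine sum_le_sum fun y hy => sum_mul_log_sum_div_le _ ?_ ?_ ?_ (hR y hy) <;>
    intro x hx <;> have hx := (mem_filter.1 hx).1
  exacts [hP x hx, hQ x hx, hPQ x hx]

theorem mul_log_div_prod_eq {ι : Type*} (s : Finset ι) {a : ℝ} {q : ι → ℝ}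
    (h : ∏ i ∈ s, q i = 0 → a = 0) :
    a * log (a / ∏ i ∈ s, q i) = a * log a - ∑ i ∈ s, a * log (q i) := by
  rcases eq_or_ne a 0 with rfl | ha
  · simp
  have hq := mt h ha
  rw [log_div ha hq, log_prod fun i hi => (prod_ne_zero_iff.1 hq) i hi, mul_sub, mul_sum]

theorem sub_mul_log_le_sq_add_binEntropy {p : ℝ} (hp : p ≤ 1) :
    p - p * log p ≤ p ^ 2 + binEntropy p := by
  have h : (1 - p) * log (1 - p) ≤ (1 - p) * -p := by
    rcases (sub_nonneg.2 hp).eq_or_lt with h | h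
    · simp [← h]
    · exact mul_le_mul_of_nonneg_left (by linarith [log_le_sub_one_of_pos h]) h.le
  rw [binEntropy_eq_negMulLog_add_negMulLog_one_sub, negMulLog, negMulLog]
  nlinarith

theorem poissonPMF_nonneg {l : ℝ} (hl : 0 ≤ l) (k : ℕ) : 0 ≤ poissonPMF l k := by
  unfold _root_.poissonPMF; positivity

theorem poissonPMF_ne_zero {l : ℝ} (hl : l ≠ 0) (k : ℕ) : poissonPMF l k ≠ 0 := by
  unfold _root_.poissonPMF; positivity

theorem mul_log_poissonPMF_zero_add_mul_log_poissonPMF_one (p : ℝ) :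
    (1 - p) * log (poissonPMF p 0) + p * log (poissonPMF p 1) = p * log p - p := by
  rcases eq_or_ne p 0 with rfl | hp
  · simp [_root_.poissonPMF]
  simp only [_root_.poissonPMF, pow_zero, pow_one, Nat.factorial, Nat.cast_one, mul_one, div_one]
  rw [log_mul (exp_ne_zero _) hp, log_exp]
  ring

theorem sum_piAntidiag_prod_poissonPMF {ι : Type*} [DecidableEq ι] (s : Finset ι) (p : ι → ℝ)
    (k : ℕ) :
    ∑ x ∈ s.piAntidiag k, ∏ i ∈ s, poissonPMF (p i) (x i) = poissonPMF (∑ i ∈ s, p i) k := by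
  rw [_root_.poissonPMF, sum_pow_eq_sum_piAntidiag, mul_sum, sum_div]
  refine sum_congr rfl fun x hx => ?_
  have hspec : (∏ i ∈ s, ((x i).factorial : ℝ)) * Nat.multinomial s x = k.factorial := by
    rw [← (mem_piAntidiag.1 hx).1]; exact_mod_cast Nat.multinomial_spec s x
  simp only [_root_.poissonPMF, prod_div_distrib, prod_mul_distrib, ← exp_sum, sum_neg_distrib]
  rw [← hspec]
  have : (Nat.multinomial s x : ℝ) ≠ 0 := by exact_mod_cast (Nat.multinomial_pos s x).ne'
  have : ∏ i ∈ s, ((x i).factorial : ℝ) ≠ 0 := prod_ne_zero_iff.2 fun i _ => by positivity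
  field_simp

theorem sum_filter_prod_poissonPMF_le {ι : Type*} [Fintype ι] [DecidableEq ι] {p : ι → ℝ}
    (hp : ∀ i, 0 ≤ p i) (t : Finset (ι → ℕ)) (k : ℕ) :
    ∑ x ∈ t with ∑ i, x i = k, ∏ i, poissonPMF (p i) (x i) ≤ poissonPMF (∑ i, p i) k := by
  rw [← sum_piAntidiag_prod_poissonPMF]
  refine sum_le_sum_of_subset_of_nonneg (fun x hx => ?_) fun x _ _ => ?_
  · simpa using (mem_filter.1 hx).2
  · exact prod_nonneg fun i _ => poissonPMF_nonneg (hp i) _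

section distOf

variable {Ω α β : Type*} [MeasurableSpace Ω] {μ : Measure Ω}

theorem distOf_nonneg (Y : Ω → α) (x : α) : 0 ≤ distOf μ Y x := ENNReal.toReal_nonneg

theorem distOf_le_one [IsProbabilityMeasure μ] (Y : Ω → α) (x : α) : distOf μ Y x ≤ 1 :=
  measureReal_le_one

theorem distOf_le_distOf_comp [IsFiniteMeasure μ] (Y : Ω → α) (f : α → β) (x : α) :
    distOf μ Y x ≤ distOf μ (f ∘ Y) (f x) :=
  measureReal_mono fun _ h => congrArg f h

variable {Y : Ω → α} {s : Finset α}

theorem distOf_eq_zero_of_notMem (hs : ∀ ω, Y ω ∈ s) {x : α} (hx : x ∉ s) :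
    distOf μ Y x = 0 := by
  have : {ω | Y ω = x} = ∅ := Set.eq_empty_of_forall_notMem fun ω h => hx (h ▸ hs ω)
  simp [distOf, this]

theorem entH_distOf_eq_sum (hs : ∀ ω, Y ω ∈ s) :
    entH (distOf μ Y) = -∑ x ∈ s, distOf μ Y x * log (distOf μ Y x) := by
  rw [entH, tsum_eq_sum fun x hx => by simp [distOf_eq_zero_of_notMem hs hx]]

theorem relEnt_distOf_eq_sum (hs : ∀ ω, Y ω ∈ s) (Q : α → ℝ) :
    relEnt (distOf μ Y) Q = ∑ x ∈ s, distOf μ Y x * log (distOf μ Y x / Q x) := by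
  rw [relEnt, tsum_eq_sum fun x hx => by simp [distOf_eq_zero_of_notMem hs hx]]

variable [MeasurableSpace α] [MeasurableSingletonClass α]

theorem sum_distOf_eq_one [IsProbabilityMeasure μ] (hY : Measurable Y) (hs : ∀ ω, Y ω ∈ s) :
    ∑ x ∈ s, distOf μ Y x = 1 := by
  have : Y ⁻¹' s = Set.univ := Set.eq_univ_of_forall hs
  rw [← probReal_univ (μ := μ), ← this]
  exact sum_measureReal_preimage_singleton s fun x _ => hY (measurableSet_singleton x)

theorem distOf_comp_eq_sum [IsFiniteMeasure μ] [DecidableEq β] (hY : Measurable Y)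
    (hs : ∀ ω, Y ω ∈ s) (f : α → β) (y : β) :
    distOf μ (f ∘ Y) y = ∑ x ∈ s with f x = y, distOf μ Y x := by
  have : Y ⁻¹' ↑{x ∈ s | f x = y} = {ω | (f ∘ Y) ω = y} := by
    ext ω; simp [hs ω]
  rw [eq_comm, distOf, ← measureReal_def, ← this]
  exact sum_measureReal_preimage_singleton _ fun x _ => hY (measurableSet_singleton x)

theorem sum_distOf_mul_comp [IsFiniteMeasure μ] [DecidableEq β] (hY : Measurable Y)
    (hs : ∀ ω, Y ω ∈ s) {t : Finset β} {f : α → β} (hf : ∀ x ∈ s, f x ∈ t) (g : β → ℝ) :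
    ∑ x ∈ s, distOf μ Y x * g (f x) = ∑ y ∈ t, distOf μ (f ∘ Y) y * g y := by
  rw [← sum_fiberwise_of_maps_to hf]
  refine sum_congr rfl fun y _ => ?_
  rw [distOf_comp_eq_sum hY hs, sum_mul]
  exact sum_congr rfl fun x hx => by rw [(mem_filter.1 hx).2]

/-- Data processing for relative entropy under a deterministic map. -/
theorem relEnt_distOf_comp_le [IsFiniteMeasure μ] [DecidableEq β] (hY : Measurable Y)
    (hs : ∀ ω, Y ω ∈ s) (f : α → β) {Q : α → ℝ} {R : β → ℝ} (hQ : ∀ x ∈ s, 0 ≤ Q x)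
    (hYQ : ∀ x ∈ s, Q x = 0 → distOf μ Y x = 0) (hR : ∀ y, ∑ x ∈ s with f x = y, Q x ≤ R y) :
    relEnt (distOf μ (f ∘ Y)) R ≤ ∑ x ∈ s, distOf μ Y x * log (distOf μ Y x / Q x) := by
  have hf : ∀ x ∈ s, f x ∈ s.image f := fun x hx => mem_image_of_mem f hx
  rw [relEnt_distOf_eq_sum (Y := f ∘ Y) fun ω => hf _ (hs ω)]
  simp only [distOf_comp_eq_sum hY hs]
  exact sum_fiberwise_mul_log_div_le _ _ hf (fun x _ => distOf_nonneg Y x) hQ hYQ fun y _ => hR y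

end distOf

section Bernoulli

variable {Ω : Type*} [MeasurableSpace Ω] {μ : Measure Ω} {X : Ω → ℕ}

theorem distOf_one_eq_integral (hX : Measurable X) (hX1 : ∀ ω, X ω ≤ 1) :
    distOf μ X 1 = ∫ ω, (X ω : ℝ) ∂μ := by
  have : (fun ω => (X ω : ℝ)) = Set.indicator (X ⁻¹' {1}) 1 := by
    ext ω
    rcases Nat.le_one_iff_eq_zero_or_eq_one.1 (hX1 ω) with h | h <;> simp [h]
  rw [this, integral_indicator_one (hX (measurableSet_singleton 1)), distOf, measureReal_def]
  rfl

variable [IsProbabilityMeasure μ]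

theorem distOf_zero_eq_one_sub (hX : Measurable X) (hX1 : ∀ ω, X ω ≤ 1) :
    distOf μ X 0 = 1 - distOf μ X 1 := by
  have := sum_distOf_eq_one (μ := μ) (s := range 2) hX fun ω => mem_range.2 (by grind)
  rw [sum_range_succ, sum_range_one] at this
  linarith

theorem entH_distOf_eq_binEntropy (hX : Measurable X) (hX1 : ∀ ω, X ω ≤ 1) :
    entH (distOf μ X) = binEntropy (distOf μ X 1) := by
  rw [entH_distOf_eq_sum (s := range 2) fun ω => mem_range.2 (by grind), sum_range_succ,
    sum_range_one, distOf_zero_eq_one_sub hX hX1, binEntropy_eq_negMulLog_add_negMulLog_one_sub,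
    negMulLog, negMulLog]
  ring

end Bernoulli

theorem mem_piFinset_range_two {Ω : Type*} {n : ℕ} {X : Fin n → Ω → ℕ}
    (hbin : ∀ i ω, X i ω ≤ 1) (ω : Ω) :
    (fun i => X i ω) ∈ Fintype.piFinset fun _ => range 2 :=
  Fintype.mem_piFinset.2 fun i => mem_range.2 (Nat.lt_succ_of_le (hbin i ω))

section BinaryVector

variable {Ω : Type*} [MeasurableSpace Ω] {μ : Measure Ω} {n : ℕ} {X : Fin n → Ω → ℕ}
  {p : Fin n → ℝ}

theorem distOf_eq_zero_of_prod_poissonPMF_eq_zero [IsFiniteMeasure μ]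
    (hp : ∀ i, distOf μ (X i) 1 = p i) {x : Fin n → ℕ}
    (hx : x ∈ Fintype.piFinset fun _ => range 2) (hQ : ∏ i, poissonPMF (p i) (x i) = 0) :
    distOf μ (fun ω i => X i ω) x = 0 := by
  obtain ⟨i, -, hi⟩ := prod_eq_zero_iff.1 hQ
  have hpi : p i = 0 := by_contra fun h => poissonPMF_ne_zero h _ hi
  have hxi : x i = 1 :=
    (Nat.le_one_iff_eq_zero_or_eq_one.1 (by simpa using Fintype.mem_piFinset.1 hx i)).resolve_left
      fun h => by simp [h, _root_.poissonPMF] at hi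
  refine le_antisymm ?_ (distOf_nonneg _ _)
  calc distOf μ (fun ω i => X i ω) x ≤ distOf μ (X i) (x i) := distOf_le_distOf_comp _ (· i) x
    _ = 0 := by rw [hxi, hp, hpi]

variable [IsProbabilityMeasure μ]

theorem sum_distOf_mul_log_poissonPMF (hmeas : ∀ i, Measurable (X i))
    (hbin : ∀ i ω, X i ω ≤ 1) (hp : ∀ i, distOf μ (X i) 1 = p i) (i : Fin n) :
    ∑ x ∈ Fintype.piFinset (fun _ => range 2),
        distOf μ (fun ω i => X i ω) x * log (poissonPMF (p i) (x i)) = p i * log (p i) - p i := by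
  rw [sum_distOf_mul_comp (measurable_pi_lambda _ hmeas) (mem_piFinset_range_two hbin)
      (f := (· i)) (g := fun c => log (poissonPMF (p i) c)) (t := range 2)
      (fun x hx => Fintype.mem_piFinset.1 hx i), sum_range_succ, sum_range_one]
  change distOf μ (X i) 0 * _ + distOf μ (X i) 1 * _ = _
  rw [distOf_zero_eq_one_sub (hmeas i) (hbin i), hp,
    mul_log_poissonPMF_zero_add_mul_log_poissonPMF_one]

theorem sum_distOf_mul_log_div_prod_poissonPMF (hmeas : ∀ i, Measurable (X i))
    (hbin : ∀ i ω, X i ω ≤ 1) (hp : ∀ i, distOf μ (X i) 1 = p i) :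
    ∑ x ∈ Fintype.piFinset (fun _ => range 2), distOf μ (fun ω i => X i ω) x *
        log (distOf μ (fun ω i => X i ω) x / ∏ i, poissonPMF (p i) (x i)) =
      -entH (distOf μ (fun ω i => X i ω)) + ∑ i, (p i - p i * log (p i)) := by
  rw [entH_distOf_eq_sum (mem_piFinset_range_two hbin),
    sum_congr rfl fun x hx => mul_log_div_prod_eq _
      (distOf_eq_zero_of_prod_poissonPMF_eq_zero hp hx),
    sum_sub_distrib, sum_comm,
    sum_congr rfl fun i _ => sum_distOf_mul_log_poissonPMF hmeas hbin hp i]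
  simp only [sum_sub_distrib]
  ring

end BinaryVector

/-- **Proposition 1** (Poisson approximation in relative entropy).
If `S_n = ∑ᵢ Xᵢ` is the sum of `n` (possibly dependent) binary random variables
with `pᵢ = E[Xᵢ]` and `E[S_n] = ∑ᵢ pᵢ = λ`, then
`D(P_{S_n} ‖ Po(λ)) ≤ ∑ᵢ pᵢ² + [∑ᵢ H(Xᵢ) - H(X₁,…,X_n)]`. -/
theorem poisson_approx_relEnt {Ω : Type*} [MeasurableSpace Ω]
    (μ : Measure Ω) [IsProbabilityMeasure μ]
    (n : ℕ) (X : Fin n → Ω → ℕ)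
    (hmeas : ∀ i, Measurable (X i))
    (hbin : ∀ i ω, X i ω ≤ 1)
    (p : Fin n → ℝ) (hp : ∀ i, ∫ ω, (X i ω : ℝ) ∂μ = p i)
    (lam : ℝ) (hlam : ∑ i, p i = lam) :
    relEnt (distOf μ (fun ω => ∑ i, X i ω)) (poissonPMF lam) ≤
      (∑ i, (p i) ^ 2) +
        ((∑ i, entH (distOf μ (X i))) - entH (distOf μ (fun ω i => X i ω))) := by
  classical
  have hp1 : ∀ i, distOf μ (X i) 1 = p i :=
    fun i => (distOf_one_eq_integral (hmeas i) (hbin i)).trans (hp i)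
  have hp_nonneg : ∀ i, 0 ≤ p i := fun i => hp1 i ▸ distOf_nonneg _ _
  subst hlam
  calc relEnt (distOf μ (fun ω => ∑ i, X i ω)) (poissonPMF (∑ i, p i))
      ≤ ∑ x ∈ Fintype.piFinset (fun _ => range 2), distOf μ (fun ω i => X i ω) x *
          log (distOf μ (fun ω i => X i ω) x / ∏ i, poissonPMF (p i) (x i)) :=
        relEnt_distOf_comp_le (measurable_pi_lambda _ hmeas) (mem_piFinset_range_two hbin)
          (fun x => ∑ i, x i) (fun x _ => prod_nonneg fun i _ => poissonPMF_nonneg (hp_nonneg i) _)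
          (fun x hx => distOf_eq_zero_of_prod_poissonPMF_eq_zero hp1 hx)
          (sum_filter_prod_poissonPMF_le hp_nonneg _)
    _ = -entH (distOf μ (fun ω i => X i ω)) + ∑ i, (p i - p i * log (p i)) :=
        sum_distOf_mul_log_div_prod_poissonPMF hmeas hbin hp1
    _ ≤ _ := by
        have := sum_le_sum fun i (_ : i ∈ univ) =>
          sub_mul_log_le_sq_add_binEntropy ((hp1 i).symm.trans_le (distOf_le_one _ _))
        simp only [entH_distOf_eq_binEntropy (hmeas _) (hbin _), hp1]
        rw [sum_add_distrib] at this
        linarith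
end

section
/- For every p ∈ [0,1], the relative entropy between the Bernoulli(p) distribution and the Poisson(p) distribution satisfies D(Bern(p) ‖ Po(p)) = (1−p) log((1−p)/e^{−p}) + p log(p/(p e^{−p})) ≤ p². -/
open MeasureTheory ProbabilityTheory Real Filter

theorem relEnt_eq_sum_of_support_subset {α : Type*} {P : α → ℝ} (Q : α → ℝ) {s : Finset α}
    (hP : ∀ x ∉ s, P x = 0) : relEnt P Q = ∑ x ∈ s, P x * Real.log (P x / Q x) :=
  tsum_eq_sum fun x hx => by simp [hP x hx]

theorem mul_log_div_mul_exp_neg (p : ℝ) : p * Real.log (p / (p * Real.exp (-p))) = p ^ 2 := by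
  rcases eq_or_ne p 0 with rfl | hp
  · simp
  rw [div_mul_eq_div_div, div_self hp, one_div, ← Real.exp_neg, neg_neg, Real.log_exp, sq]

theorem one_sub_mul_log_div_exp_neg_nonpos {p : ℝ} (hp : p ≤ 1) :
    (1 - p) * Real.log ((1 - p) / Real.exp (-p)) ≤ 0 := by
  have h_le_exp : 1 - p ≤ Real.exp (-p) := by linarith [Real.add_one_le_exp (-p)]
  refine mul_nonpos_of_nonneg_of_nonpos (by linarith) (Real.log_nonpos ?_ ?_)
  · exact div_nonneg (by linarith) (Real.exp_pos _).le
  · exact (div_le_one (Real.exp_pos _)).2 h_le_exp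

theorem relEnt_bernoulli_poisson_general (p : ℝ) (hp1 : p ≤ 1) :
    relEnt (fun k => if k = 0 then 1 - p else if k = 1 then p else 0) (poissonPMF p) =
      (1 - p) * Real.log ((1 - p) / Real.exp (-p)) +
        p * Real.log (p / (p * Real.exp (-p))) ∧
    (1 - p) * Real.log ((1 - p) / Real.exp (-p)) +
        p * Real.log (p / (p * Real.exp (-p))) ≤ p ^ 2 := by
  refine ⟨?_, ?_⟩
  · rw [relEnt_eq_sum_of_support_subset _ (s := {0, 1}) fun k hk => by grind]
    simp [_root_.poissonPMF, mul_comm]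
  · rw [mul_log_div_mul_exp_neg]
    linarith [one_sub_mul_log_div_exp_neg_nonpos hp1]

/-- `D(Bern(p) ‖ Po(p)) = (1-p) log((1-p)/e^{-p}) + p log(p/(p e^{-p})) ≤ p²` for `p ∈ [0,1]`. -/
theorem relEnt_bernoulli_poisson (p : ℝ) (hp0 : 0 ≤ p) (hp1 : p ≤ 1) :
    relEnt (fun k => if k = 0 then 1 - p else if k = 1 then p else 0) (poissonPMF p) =
      (1 - p) * Real.log ((1 - p) / Real.exp (-p)) +
        p * Real.log (p / (p * Real.exp (-p))) ∧
    (1 - p) * Real.log ((1 - p) / Real.exp (-p)) +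
        p * Real.log (p / (p * Real.exp (-p))) ≤ p ^ 2 :=
  relEnt_bernoulli_poisson_general p hp1
end

section
/- Let λ > 0, ε > 0, and let S_n be the sum of n i.i.d. Bernoulli(λ/n) random variables, where n ≥ λ/ε and n > λ. Then ‖P_{S_n} − Po(λ)‖_TV ≤ (2 + ε) λ / n. -/
open MeasureTheory ProbabilityTheory Real Filter

/-! The Stein–Chen method. For a finite `A ⊆ ℕ`, the Stein equation
`λ g(j+1) - j g(j) = 1_A(j) - Po(λ)(A)` has a solution with `g(j+2) - g(j+1) ≤ 1/λ`: it is the sum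
of the solutions for the singletons `{i} ⊆ A`, whose increments are `≤ 0` except at `j + 1 = i`,
where they are `≤ 1/λ`; both facts come from the monotonicity of `F(j)/q(j)` and `(1 - F(j))/q(j)`
for the Poisson pmf `q` and distribution function `F`. If `S = ∑ Xᵢ` with independent
Bernoulli(`pᵢ`) summands, then `S = Tᵢ + Xᵢ` with `Tᵢ` independent of `Xᵢ`, and this gives
`E[λ g(S+1) - S g(S)] = ∑ pᵢ² E[g(Tᵢ+2) - g(Tᵢ+1)] ≤ ∑ pᵢ² / λ`. So
`P(S ∈ A) - Po(λ)(A) ≤ ∑ pᵢ² / λ = λ/n` for every `A`, and the total variation distance is at most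
twice this.
-/

open Finset

section Poisson

variable {lam : ℝ}

lemma poissonPMF_nonneg_s16 (hlam : 0 ≤ lam) (k : ℕ) : 0 ≤ poissonPMF lam k := by
  unfold _root_.poissonPMF; positivity

lemma poissonPMF_pos (hlam : 0 < lam) (k : ℕ) : 0 < poissonPMF lam k := by
  unfold _root_.poissonPMF; positivity

lemma hasSum_poissonPMF (hlam : 0 ≤ lam) : HasSum (poissonPMF lam) 1 :=
  hasSum_one_poissonMeasure ⟨lam, hlam⟩

lemma succ_mul_poissonPMF_succ (lam : ℝ) (k : ℕ) :
    (k + 1 : ℝ) * poissonPMF lam (k + 1) = lam * poissonPMF lam k := by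
  simp only [_root_.poissonPMF, Nat.factorial_succ, Nat.cast_mul, Nat.cast_succ, pow_succ]
  field_simp

noncomputable def poissonCDF (lam : ℝ) (j : ℕ) : ℝ :=
  ∑ k ∈ range (j + 1), poissonPMF lam k

lemma one_sub_poissonCDF (hlam : 0 ≤ lam) (j : ℕ) :
    1 - poissonCDF lam j = ∑' k, poissonPMF lam (k + (j + 1)) := by
  rw [← (hasSum_poissonPMF hlam).tsum_eq, ← (hasSum_poissonPMF hlam).summable.sum_add_tsum_nat_add,
    poissonCDF, add_sub_cancel_left]

lemma lam_mul_poissonCDF_le (hlam : 0 ≤ lam) (j : ℕ) :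
    lam * poissonCDF lam j ≤ (j + 1) * poissonCDF lam (j + 1) := by
  calc lam * poissonCDF lam j = ∑ k ∈ range (j + 1), (k + 1 : ℝ) * poissonPMF lam (k + 1) := by
        simp only [poissonCDF, mul_sum, succ_mul_poissonPMF_succ]
    _ ≤ ∑ k ∈ range (j + 1), (j + 1 : ℝ) * poissonPMF lam (k + 1) := by
        gcongr with k hk
        · exact poissonPMF_nonneg_s16 hlam _
        · exact_mod_cast Nat.le_of_lt_succ (mem_range.mp hk)
    _ ≤ (j + 1) * poissonCDF lam (j + 1) := by
        rw [← mul_sum, poissonCDF, sum_range_succ' _ (j + 1)]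
        gcongr
        exact le_add_of_nonneg_right (poissonPMF_nonneg_s16 hlam 0)

lemma succ_mul_one_sub_poissonCDF_le (hlam : 0 ≤ lam) (j : ℕ) :
    (j + 1) * (1 - poissonCDF lam (j + 1)) ≤ lam * (1 - poissonCDF lam j) := by
  have hsum (m : ℕ) : Summable fun k => poissonPMF lam (k + m) :=
    (summable_nat_add_iff m).mpr (hasSum_poissonPMF hlam).summable
  rw [one_sub_poissonCDF hlam, one_sub_poissonCDF hlam, ← tsum_mul_left, ← tsum_mul_left]
  refine (hsum _).mul_left _ |>.tsum_le_tsum (fun k => ?_) ((hsum _).mul_left _)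
  rw [← succ_mul_poissonPMF_succ, ← add_assoc]
  gcongr
  · exact poissonPMF_nonneg_s16 hlam _
  · linarith [(k.cast_nonneg : (0 : ℝ) ≤ k)]

lemma monotone_poissonCDF_div_poissonPMF (hlam : 0 < lam) :
    Monotone fun j => poissonCDF lam j / poissonPMF lam j := by
  refine monotone_nat_of_le_succ fun j => ?_
  rw [div_le_div_iff₀ (poissonPMF_pos hlam j) (poissonPMF_pos hlam (j + 1))]
  refine le_of_mul_le_mul_left ?_ (by positivity : (0 : ℝ) < j + 1)
  have := mul_le_mul_of_nonneg_right (lam_mul_poissonCDF_le hlam.le j)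
    (poissonPMF_nonneg_s16 hlam.le j)
  linear_combination this + poissonCDF lam j * succ_mul_poissonPMF_succ lam j

lemma antitone_one_sub_poissonCDF_div_poissonPMF (hlam : 0 < lam) :
    Antitone fun j => (1 - poissonCDF lam j) / poissonPMF lam j := by
  refine antitone_nat_of_succ_le fun j => ?_
  rw [div_le_div_iff₀ (poissonPMF_pos hlam (j + 1)) (poissonPMF_pos hlam j)]
  refine le_of_mul_le_mul_left ?_ (by positivity : (0 : ℝ) < j + 1)
  have := mul_le_mul_of_nonneg_right (succ_mul_one_sub_poissonCDF_le hlam.le j)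
    (poissonPMF_nonneg_s16 hlam.le j)
  linear_combination this - (1 - poissonCDF lam j) * succ_mul_poissonPMF_succ lam j

end Poisson

section Stein

variable {lam : ℝ}

noncomputable def steinSolution (lam : ℝ) (f : ℕ → ℝ) : ℕ → ℝ
  | 0 => 0
  | j + 1 => (∑ k ∈ range (j + 1), f k * poissonPMF lam k) / (lam * poissonPMF lam j)

lemma steinSolution_spec (hlam : 0 < lam) (f : ℕ → ℝ) (j : ℕ) :
    lam * steinSolution lam f (j + 1) - j * steinSolution lam f j = f j := by
  have hq (k : ℕ) := (poissonPMF_pos hlam k).ne'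
  have := hlam.ne'
  cases j with
  | zero => have := hq 0; simp [steinSolution]; field_simp
  | succ j =>
    have := hq j
    have := hq (j + 1)
    simp only [steinSolution, sum_range_succ _ (j + 1)]
    rw [← succ_mul_poissonPMF_succ lam j]
    push_cast
    field_simp
    ring

lemma steinSolution_single_succ (hlam : 0 < lam) (i j : ℕ) :
    steinSolution lam (fun k => (if k = i then 1 else 0) - poissonPMF lam i) (j + 1) =
      poissonPMF lam i / lam * if i ≤ j then (1 - poissonCDF lam j) / poissonPMF lam j
        else -(poissonCDF lam j / poissonPMF lam j) := by
  have := (poissonPMF_pos hlam j).ne'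
  have := hlam.ne'
  simp only [steinSolution, sub_mul, sum_sub_distrib, ite_mul, one_mul, zero_mul, sum_ite_eq',
    mem_range, ← mul_sum, Nat.lt_succ_iff, poissonCDF]
  split_ifs
  · field_simp
  · field_simp; ring

lemma steinSolution_single_succ_succ_sub_le (hlam : 0 < lam) (i j : ℕ) :
    steinSolution lam (fun k => (if k = i then 1 else 0) - poissonPMF lam i) (j + 2) -
        steinSolution lam (fun k => (if k = i then 1 else 0) - poissonPMF lam i) (j + 1) ≤
      if i = j + 1 then 1 / lam else 0 := by
  have hF := monotone_poissonCDF_div_poissonPMF hlam (Nat.le_succ j)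
  have hT := antitone_one_sub_poissonCDF_div_poissonPMF hlam (Nat.le_succ j)
  have hqi := poissonPMF_pos hlam i
  simp only at hF hT
  rw [steinSolution_single_succ hlam i (j + 1), steinSolution_single_succ hlam i j]
  rcases lt_trichotomy i (j + 1) with hij | rfl | hij
  · simp only [Nat.le_of_lt_succ hij, hij.le, hij.ne, if_true, if_false, ← mul_sub]
    exact mul_nonpos_of_nonneg_of_nonpos (by positivity) (sub_nonpos.mpr hT)
  · have hq := (poissonPMF_pos hlam (j + 1)).ne'
    simp only [le_refl, Nat.not_succ_le_self, if_true, if_false, ← mul_sub, sub_neg_eq_add]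
    rw [div_mul_eq_mul_div, div_le_div_iff_of_pos_right hlam]
    calc _ ≤ poissonPMF lam (j + 1) * ((1 - poissonCDF lam (j + 1)) / poissonPMF lam (j + 1) +
          poissonCDF lam (j + 1) / poissonPMF lam (j + 1)) := by gcongr
      _ = 1 := by field_simp; ring
  · simp only [Nat.not_le_of_lt hij, Nat.not_le_of_lt (Nat.lt_of_succ_lt hij), hij.ne', if_false,
      ← mul_sub, sub_neg_eq_add]
    exact mul_nonpos_of_nonneg_of_nonpos (by positivity) (by linarith)

lemma exists_stein_solution_finset (hlam : 0 < lam) (A : Finset ℕ) :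
    ∃ g : ℕ → ℝ,
      (∀ j, lam * g (j + 1) - j * g j = (if j ∈ A then 1 else 0) - ∑ i ∈ A, poissonPMF lam i) ∧
      ∀ j, g (j + 2) - g (j + 1) ≤ 1 / lam := by
  refine ⟨fun j => ∑ i ∈ A,
    steinSolution lam (fun k => (if k = i then 1 else 0) - poissonPMF lam i) j, fun j => ?_,
    fun j => ?_⟩
  · simp only [mul_sum, ← sum_sub_distrib, steinSolution_spec hlam]
    rw [sum_sub_distrib, sum_ite_eq]
  · rw [← sum_sub_distrib]
    calc _ ≤ ∑ i ∈ A, if i = j + 1 then 1 / lam else 0 :=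
          sum_le_sum fun i _ => steinSolution_single_succ_succ_sub_le hlam i j
      _ ≤ 1 / lam := by
          rw [sum_ite_eq']
          split_ifs
          exacts [le_rfl, by positivity]

end Stein

lemma tvDist_le_two_mul {α : Type*} {P Q : α → ℝ} (hP : Summable P) (hQ : Summable Q)
    (hPQ : ∑' x, P x = ∑' x, Q x) {δ : ℝ} (hδ : ∀ A : Finset α, ∑ x ∈ A, (P x - Q x) ≤ δ) :
    tvDist P Q ≤ 2 * δ := by
  classical
  have hd : Summable fun x => P x - Q x := hP.sub hQ
  have hpos : Summable fun x => max (P x - Q x) 0 :=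
    .of_nonneg_of_le (fun x => le_max_right _ _) (fun x => max_le (le_abs_self _) (abs_nonneg _))
      hd.abs
  calc tvDist P Q = ∑' x, (2 * max (P x - Q x) 0 - (P x - Q x)) := by
        unfold tvDist
        congr with x
        rcases le_total 0 (P x - Q x) with h | h
        · rw [abs_of_nonneg h, max_eq_left h]; ring
        · rw [abs_of_nonpos h, max_eq_right h]; ring
    _ = 2 * ∑' x, max (P x - Q x) 0 := by
        rw [(hpos.mul_left 2).tsum_sub hd, tsum_mul_left, hP.tsum_sub hQ, hPQ, sub_self, sub_zero]
    _ ≤ 2 * δ := by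
        gcongr
        refine hpos.tsum_le_of_sum_le fun A => ?_
        calc ∑ x ∈ A, max (P x - Q x) 0 = ∑ x ∈ A with 0 < P x - Q x, (P x - Q x) := by
              rw [sum_filter]
              congr with x
              split_ifs with h
              exacts [max_eq_left h.le, max_eq_right (not_lt.mp h)]
          _ ≤ δ := hδ _

section Probability

variable {Ω : Type*} [MeasurableSpace Ω] {μ : Measure Ω}

lemma hasSum_distOf [IsProbabilityMeasure μ] {α : Type*} [Countable α] [MeasurableSpace α]
    [MeasurableSingletonClass α] {Y : Ω → α} (hY : Measurable Y) : HasSum (distOf μ Y) 1 := by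
  have h := tsum_measure_preimage_singleton (μ := μ) Set.countable_univ
    fun a _ => hY (measurableSet_singleton a)
  rw [tsum_univ (f := fun a => μ (Y ⁻¹' {a})), Set.preimage_univ, measure_univ] at h
  have := (ENNReal.summable_toReal (h ▸ ENNReal.one_ne_top)).hasSum
  rwa [← ENNReal.tsum_toReal_eq fun _ => measure_ne_top _ _, h, ENNReal.toReal_one] at this

lemma sum_distOf_eq_integral_indicator {α : Type*} [MeasurableSpace α]
    [MeasurableSingletonClass α] [IsFiniteMeasure μ] {Y : Ω → α} (hY : Measurable Y)
    (A : Finset α) : ∑ a ∈ A, distOf μ Y a = ∫ ω, (Y ⁻¹' A).indicator 1 ω ∂μ := by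
  rw [integral_indicator_one (hY A.measurableSet), ← sum_measureReal_preimage_singleton A
    fun a _ => hY (measurableSet_singleton a)]
  rfl

lemma integrable_comp_of_le [IsFiniteMeasure μ] {Y : Ω → ℕ} (hY : Measurable Y) {m : ℕ}
    (hYm : ∀ ω, Y ω ≤ m) (f : ℕ → ℝ) : Integrable (fun ω => f (Y ω)) μ := by
  refine .of_bound (measurable_from_nat.comp hY).aestronglyMeasurable (∑ k ∈ range (m + 1), |f k|)
    (ae_of_all _ fun ω => ?_)
  exact single_le_sum (f := fun k => |f k|) (fun k _ => abs_nonneg _)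
    (mem_range.mpr (Nat.lt_succ_of_le (hYm ω)))

lemma integral_natCast_eq_distOf_one {X : Ω → ℕ} (hX : Measurable X) (hX1 : ∀ ω, X ω ≤ 1) :
    ∫ ω, (X ω : ℝ) ∂μ = distOf μ X 1 := by
  have hind (ω : Ω) : (X ω : ℝ) = (X ⁻¹' {1}).indicator 1 ω := by
    rcases Nat.le_one_iff_eq_zero_or_eq_one.mp (hX1 ω) with h | h <;> simp [h]
  simp_rw [hind]
  exact integral_indicator_one (hX (measurableSet_singleton 1))

lemma integral_natCast_mul_comp_eq {X T : Ω → ℕ} (hX : Measurable X) (hT : Measurable T)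
    (hX1 : ∀ ω, X ω ≤ 1) (hXT : IndepFun X T μ) (h : ℕ → ℝ) :
    ∫ ω, X ω * h (T ω) ∂μ = distOf μ X 1 * ∫ ω, h (T ω) ∂μ := by
  rw [← integral_natCast_eq_distOf_one hX hX1]
  exact (hXT.comp measurable_from_nat measurable_from_nat).integral_fun_mul_eq_mul_integral
    (measurable_from_nat.comp hX).aestronglyMeasurable
    (measurable_from_nat.comp hT).aestronglyMeasurable

lemma integral_natCast_mul_comp_add_eq {X T : Ω → ℕ} (hX : Measurable X) (hT : Measurable T)
    (hX1 : ∀ ω, X ω ≤ 1) (hXT : IndepFun X T μ) (g : ℕ → ℝ) :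
    ∫ ω, X ω * g (T ω + X ω) ∂μ = distOf μ X 1 * ∫ ω, g (T ω + 1) ∂μ := by
  rw [← integral_natCast_mul_comp_eq hX hT hX1 hXT fun t => g (t + 1)]
  congr with ω
  rcases Nat.le_one_iff_eq_zero_or_eq_one.mp (hX1 ω) with h | h <;> simp [h]

lemma integral_comp_add_succ_sub_le [IsProbabilityMeasure μ] {X T : Ω → ℕ} (hX : Measurable X)
    (hT : Measurable T) (hX1 : ∀ ω, X ω ≤ 1) (hXT : IndepFun X T μ) {m : ℕ} (hTm : ∀ ω, T ω ≤ m)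
    (g : ℕ → ℝ) {c : ℝ} (hg : ∀ k, g (k + 2) - g (k + 1) ≤ c) :
    ∫ ω, g (T ω + X ω + 1) ∂μ - ∫ ω, g (T ω + 1) ∂μ ≤ distOf μ X 1 * c := by
  have hS : Integrable (fun ω => g (T ω + X ω + 1)) μ :=
    integrable_comp_of_le (hT.add hX) (fun ω => add_le_add (hTm ω) (hX1 ω)) fun k => g (k + 1)
  rw [← integral_sub hS (integrable_comp_of_le hT hTm fun k => g (k + 1))]
  calc ∫ ω, g (T ω + X ω + 1) - g (T ω + 1) ∂μ
      = ∫ ω, X ω * (g (T ω + 2) - g (T ω + 1)) ∂μ := by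
        congr with ω
        rcases Nat.le_one_iff_eq_zero_or_eq_one.mp (hX1 ω) with h | h <;> simp [h]
    _ = distOf μ X 1 * ∫ ω, g (T ω + 2) - g (T ω + 1) ∂μ :=
        integral_natCast_mul_comp_eq hX hT hX1 hXT fun t => g (t + 2) - g (t + 1)
    _ ≤ distOf μ X 1 * c := by
        gcongr
        · exact ENNReal.toReal_nonneg
        · calc _ ≤ ∫ _, c ∂μ := integral_mono
                (integrable_comp_of_le hT hTm fun t => g (t + 2) - g (t + 1))
                (integrable_const c) fun ω => hg (T ω)
            _ = c := by simp

variable [IsProbabilityMeasure μ] {ι : Type*} [Fintype ι] {X : ι → Ω → ℕ}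

theorem integral_stein_operator_le (hmeas : ∀ i, Measurable (X i)) (hbin : ∀ i ω, X i ω ≤ 1)
    (hindep : iIndepFun X μ) (g : ℕ → ℝ) {c : ℝ} (hg : ∀ k, g (k + 2) - g (k + 1) ≤ c) :
    ∫ ω, ((∑ i, distOf μ (X i) 1) * g (∑ i, X i ω + 1) - (∑ i, X i ω : ℕ) * g (∑ i, X i ω)) ∂μ
      ≤ c * ∑ i, distOf μ (X i) 1 ^ 2 := by
  classical
  set p := fun i => distOf μ (X i) 1
  set S := fun ω => ∑ i, X i ω
  set T := fun i ω => ∑ j ∈ univ.erase i, X j ω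
  have hS : Measurable S := Finset.measurable_sum _ fun i _ => hmeas i
  have hSle (ω : Ω) : S ω ≤ Fintype.card ι := by
    simpa using sum_le_sum fun i (_ : i ∈ univ) => hbin i ω
  have hT (i : ι) : Measurable (T i) := Finset.measurable_sum _ fun j _ => hmeas j
  have hTle (i : ι) (ω : Ω) : T i ω ≤ Fintype.card ι :=
    (sum_le_sum_of_subset (erase_subset i univ)).trans (hSle ω)
  have hST (i : ι) (ω : Ω) : S ω = T i ω + X i ω := (sum_erase_add _ _ (mem_univ i)).symm
  have hXT (i : ι) : IndepFun (X i) (T i) μ := by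
    have := (hindep.indepFun_finsetSum_of_notMem hmeas (notMem_erase i univ)).symm
    convert this using 1
    ext ω
    simp [T]
  have hXg (i : ι) : ∫ ω, X i ω * g (S ω) ∂μ = p i * ∫ ω, g (T i ω + 1) ∂μ := by
    simp_rw [hST i]
    exact integral_natCast_mul_comp_add_eq (hmeas i) (hT i) (hbin i) (hXT i) g
  have hΔ (i : ι) : ∫ ω, g (S ω + 1) ∂μ - ∫ ω, g (T i ω + 1) ∂μ ≤ p i * c := by
    simp_rw [hST i]
    exact integral_comp_add_succ_sub_le (hmeas i) (hT i) (hbin i) (hXT i) (hTle i) g hg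
  have hXgint (i : ι) : Integrable (fun ω => X i ω * g (S ω)) μ :=
    (integrable_comp_of_le hS hSle g).bdd_mul (c := 1)
      (measurable_from_nat.comp (hmeas i)).aestronglyMeasurable
      (ae_of_all _ fun ω => by simpa using hbin i ω)
  calc ∫ ω, ((∑ i, p i) * g (S ω + 1) - (S ω : ℕ) * g (S ω)) ∂μ
      = (∑ i, p i) * ∫ ω, g (S ω + 1) ∂μ - ∑ i, ∫ ω, X i ω * g (S ω) ∂μ := by
        rw [integral_sub ((integrable_comp_of_le hS hSle fun k => g (k + 1)).const_mul _)
          (integrable_comp_of_le hS hSle fun k => k * g k), integral_const_mul,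
          ← integral_finsetSum _ fun i _ => hXgint i]
        congr with ω
        simp [S, sum_mul]
    _ = ∑ i, p i * (∫ ω, g (S ω + 1) ∂μ - ∫ ω, g (T i ω + 1) ∂μ) := by
        simp_rw [hXg, mul_sub, sum_sub_distrib, sum_mul]
    _ ≤ ∑ i, p i * (p i * c) := by
        gcongr with i
        · exact ENNReal.toReal_nonneg
        · exact hΔ i
    _ = c * ∑ i, p i ^ 2 := by
        rw [mul_sum]; congr with i; ring

theorem tvDist_distOf_sum_poissonPMF_le (hmeas : ∀ i, Measurable (X i))
    (hbin : ∀ i ω, X i ω ≤ 1) (hindep : iIndepFun X μ) (hlam : 0 < ∑ i, distOf μ (X i) 1) :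
    tvDist (distOf μ fun ω => ∑ i, X i ω) (poissonPMF (∑ i, distOf μ (X i) 1)) ≤
      2 * ((∑ i, distOf μ (X i) 1 ^ 2) / ∑ i, distOf μ (X i) 1) := by
  set lam := ∑ i, distOf μ (X i) 1
  have hS : Measurable fun ω => ∑ i, X i ω := Finset.measurable_sum _ fun i _ => hmeas i
  refine tvDist_le_two_mul (hasSum_distOf hS).summable (hasSum_poissonPMF hlam.le).summable
    (by rw [(hasSum_distOf hS).tsum_eq, (hasSum_poissonPMF hlam.le).tsum_eq]) fun A => ?_
  obtain ⟨g, hstein, hg⟩ := exists_stein_solution_finset hlam A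
  calc ∑ k ∈ A, (distOf μ (fun ω => ∑ i, X i ω) k - poissonPMF lam k)
      = ∫ ω, ((fun ω => ∑ i, X i ω) ⁻¹' A).indicator 1 ω - ∑ k ∈ A, poissonPMF lam k ∂μ := by
        rw [integral_sub ((integrable_const 1).indicator (hS A.measurableSet)) (integrable_const _),
          integral_const, sum_sub_distrib, sum_distOf_eq_integral_indicator hS A]
        simp
    _ = ∫ ω, (lam * g (∑ i, X i ω + 1) - (∑ i, X i ω : ℕ) * g (∑ i, X i ω)) ∂μ := by
        congr with ω
        rw [hstein]
        by_cases h : ∑ i, X i ω ∈ A <;> simp [h]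
    _ ≤ 1 / lam * ∑ i, distOf μ (X i) 1 ^ 2 := integral_stein_operator_le hmeas hbin hindep g hg
    _ = (∑ i, distOf μ (X i) 1 ^ 2) / lam := by ring

end Probability

theorem tv_poisson_approx_iid_bernoulli_general {Ω : Type*} [MeasurableSpace Ω]
    (μ : Measure Ω) [IsProbabilityMeasure μ]
    (lam ε : ℝ) (hlampos : 0 < lam) (hεpos : 0 < ε)
    (n : ℕ) (X : Fin n → Ω → ℕ)
    (hmeas : ∀ i, Measurable (X i))
    (hbin : ∀ i ω, X i ω ≤ 1)
    (hindep : iIndepFun X μ)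
    (hid : ∀ i, distOf μ (X i) 1 = lam / n)
    (hn2 : lam < (n : ℝ)) :
    tvDist (distOf μ (fun ω => ∑ i, X i ω)) (poissonPMF lam) ≤ (2 + ε) * lam / n := by
  have hn : (0 : ℝ) < n := hlampos.trans hn2
  have hsum : ∑ i, distOf μ (X i) 1 = lam := by simp [hid]; field_simp
  have h := tvDist_distOf_sum_poissonPMF_le hmeas hbin hindep (hsum ▸ hlampos)
  rw [hsum] at h
  calc _ ≤ 2 * ((∑ i, distOf μ (X i) 1 ^ 2) / lam) := h
    _ = 2 * lam / n := by simp [hid]; field_simp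
    _ ≤ (2 + ε) * lam / n := by gcongr; linarith

/-- **Example 1**: if `S_n` is the sum of `n` i.i.d. Bernoulli(λ/n) random variables with
`n ≥ λ/ε` and `n > λ`, then `‖P_{S_n} - Po(λ)‖_TV ≤ (2+ε) λ/n`. -/
theorem tv_poisson_approx_iid_bernoulli {Ω : Type*} [MeasurableSpace Ω]
    (μ : Measure Ω) [IsProbabilityMeasure μ]
    (lam ε : ℝ) (hlampos : 0 < lam) (hεpos : 0 < ε)
    (n : ℕ) (X : Fin n → Ω → ℕ)
    (hmeas : ∀ i, Measurable (X i))
    (hbin : ∀ i ω, X i ω ≤ 1)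
    (hindep : iIndepFun X μ)
    (hid : ∀ i, distOf μ (X i) 1 = lam / n)
    (hn1 : lam / ε ≤ (n : ℝ)) (hn2 : lam < (n : ℝ)) :
    tvDist (distOf μ (fun ω => ∑ i, X i ω)) (poissonPMF lam) ≤ (2 + ε) * lam / n :=
  tv_poisson_approx_iid_bernoulli_general μ lam ε hlampos hεpos n X hmeas hbin hindep hid hn2
end
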